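/- arXiv:2410.06082 — 2 statements merged into one kernel-verified Lean document; each statement's English description precedes it below -/
import Mathlib

section
/- For any integer q ≥ 3, any real 1/2 ≤ σ ≤ 2, and any completely multiplicative function χ with |χ(p)| ≤ 1, one has |∏_{p ∣ q} (1 - χ(p) p^{-σ-it})| ≤ exp((log q)^{(2-σ)/2}) for all real t. -/
/-!
Each factor has norm at most `1 + p^{-σ} ≤ exp (p^{-σ})`, so it suffices to show
`∑_{p ∣ q} p^{-σ} ≤ (log q)^{(2-σ)/2}`. Hölder's inequality with weights `log p` and exponent
`2/σ` bounds the sum by `(∑ log p)^{(2-σ)/2} (∑ (log p)^{1-2/σ} p^{-2})^{σ/2}`. The first factor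
is at most `(log q)^{(2-σ)/2}`, and the second at most `1`: since `-3 ≤ 1 - 2/σ ≤ 0`, the prime `2`
contributes at most `(log 2)^{-3}/4 < 0.76`, the prime `3` at most `1/9`, and the odd primes
`p ≥ 5` at most `∑_{k ≥ 2} 1/(4k(k+1)) = 1/8`.
-/

open Finset Real

lemma sum_inv_mul_add_one_le {S : Finset ℕ} {m : ℕ} (hm : 0 < m) (hS : ∀ k ∈ S, m ≤ k) :
    ∑ k ∈ S, ((k : ℝ) * (k + 1))⁻¹ ≤ (m : ℝ)⁻¹ := by
  set N := max m (S.sup id + 1)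
  have hsub : S ⊆ Ico m N := fun k hk =>
    mem_Ico.2 ⟨hS k hk, lt_max_of_lt_right (Nat.lt_succ_of_le (le_sup (f := id) hk))⟩
  calc ∑ k ∈ S, ((k : ℝ) * (k + 1))⁻¹
      ≤ ∑ k ∈ Ico m N, ((k : ℝ) * (k + 1))⁻¹ :=
        sum_le_sum_of_subset_of_nonneg hsub fun _ _ _ => by positivity
    _ = ∑ k ∈ Ico m N, (-((k + 1 : ℕ) : ℝ)⁻¹ - -(k : ℝ)⁻¹) := by
        refine sum_congr rfl fun k hk => ?_
        have hk : (k : ℝ) ≠ 0 := Nat.cast_ne_zero.2 (by have := (mem_Ico.1 hk).1; omega)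
        push_cast
        field_simp
        ring
    _ = (m : ℝ)⁻¹ - (N : ℝ)⁻¹ := by
        rw [sum_Ico_sub (fun i : ℕ => -(i : ℝ)⁻¹) (le_max_left _ _)]
        ring
    _ ≤ (m : ℝ)⁻¹ := sub_le_self _ (by positivity)

lemma sum_inv_sq_le_of_odd {S : Finset ℕ} {m : ℕ} (hm : 0 < m)
    (hS : ∀ n ∈ S, Odd n ∧ 2 * m + 1 ≤ n) :
    ∑ n ∈ S, ((n : ℝ) ^ 2)⁻¹ ≤ (4 * m : ℝ)⁻¹ := by
  have hinj : Set.InjOn (· / 2) (S : Set ℕ) := fun a ha b hb hab => by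
    obtain ⟨⟨i, rfl⟩, -⟩ := hS a ha
    obtain ⟨⟨j, rfl⟩, -⟩ := hS b hb
    simp only at hab
    omega
  have hterm : ∀ n ∈ S, ((n : ℝ) ^ 2)⁻¹ ≤ 4⁻¹ * (((n / 2 : ℕ) : ℝ) * ((n / 2 : ℕ) + 1))⁻¹ := by
    intro n hn
    obtain ⟨⟨k, rfl⟩, hk⟩ := hS n hn
    rw [show (2 * k + 1) / 2 = k by omega, ← mul_inv]
    have hk : (1 : ℝ) ≤ k := by exact_mod_cast (show 1 ≤ k by omega)
    exact inv_anti₀ (by positivity) (by push_cast; nlinarith)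
  calc ∑ n ∈ S, ((n : ℝ) ^ 2)⁻¹
      ≤ ∑ n ∈ S, 4⁻¹ * (((n / 2 : ℕ) : ℝ) * ((n / 2 : ℕ) + 1))⁻¹ := sum_le_sum hterm
    _ = 4⁻¹ * ∑ k ∈ S.image (· / 2), (((k : ℕ) : ℝ) * (k + 1))⁻¹ := by rw [mul_sum, sum_image hinj]
    _ ≤ 4⁻¹ * (m : ℝ)⁻¹ := by
        gcongr
        refine sum_inv_mul_add_one_le hm fun k hk => ?_
        obtain ⟨n, hn, rfl⟩ := mem_image.1 hk
        have := (hS n hn).2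
        omega
    _ = (4 * m : ℝ)⁻¹ := (mul_inv _ _).symm

lemma one_le_log_of_three_le {x : ℝ} (hx : 3 ≤ x) : 1 ≤ log x := by
  rw [le_log_iff_exp_le (by linarith)]
  linarith [exp_one_lt_d9]

lemma sum_prime_log_rpow_div_sq_le_one {S : Finset ℕ} (hS : ∀ p ∈ S, p.Prime) {a : ℝ}
    (ha₃ : -3 ≤ a) (ha₀ : a ≤ 0) :
    ∑ p ∈ S, log p ^ a / (p : ℝ) ^ 2 ≤ 1 := by
  set g : ℕ → ℝ := fun n => log n ^ a / (n : ℝ) ^ 2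
  have hg : ∀ n, 0 ≤ g n := fun n => div_nonneg (rpow_nonneg (log_natCast_nonneg n) a) (sq_nonneg _)
  have hlog_rpow : ∀ n : ℕ, 3 ≤ n → log n ^ a ≤ 1 := fun n hn =>
    rpow_le_one_of_one_le_of_nonpos (one_le_log_of_three_le (by exact_mod_cast hn)) ha₀
  have hg2 : g 2 ≤ 0.76 := by
    have hlog2 : 0.693 < log 2 := by linarith [log_two_gt_d9]
    have hpow : log 2 ^ a ≤ (log 2 ^ 3)⁻¹ := by
      rw [← rpow_natCast, ← rpow_neg (by linarith)]
      exact rpow_le_rpow_of_exponent_ge (by linarith) (by linarith [log_two_lt_d9])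
        (by push_cast; exact ha₃)
    have hcube : (log 2 ^ 3)⁻¹ ≤ (0.693 ^ 3 : ℝ)⁻¹ :=
      inv_anti₀ (by norm_num) (pow_le_pow_left₀ (by norm_num) hlog2.le 3)
    simp only [g]
    push_cast
    rw [div_le_iff₀ (by norm_num)]
    norm_num at hcube
    linarith
  have hg3 : g 3 ≤ 1 / 9 := by
    have h := hlog_rpow 3 le_rfl
    simp only [g]
    rw [div_le_iff₀ (by positivity)]
    push_cast at h ⊢
    linarith
  have hrest : ∑ p ∈ S \ {2, 3}, g p ≤ 1 / 8 := by
    have hodd : ∀ p ∈ S \ {2, 3}, Odd p ∧ 2 * 2 + 1 ≤ p := by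
      intro p hp
      simp only [mem_sdiff, mem_insert, mem_singleton, not_or] at hp
      obtain ⟨hpS, hp2, hp3⟩ := hp
      have hpr := hS p hpS
      refine ⟨hpr.odd_of_ne_two hp2, ?_⟩
      have := hpr.two_le
      have : p ≠ 4 := by rintro rfl; norm_num at hpr
      omega
    calc ∑ p ∈ S \ {2, 3}, g p ≤ ∑ p ∈ S \ {2, 3}, ((p : ℝ) ^ 2)⁻¹ := by
          refine sum_le_sum fun p hp => ?_
          simp only [g]
          rw [div_eq_mul_inv]
          exact mul_le_of_le_one_left (by positivity) (hlog_rpow p (by linarith [(hodd p hp).2]))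
      _ ≤ (4 * 2 : ℝ)⁻¹ := by exact_mod_cast sum_inv_sq_le_of_odd two_pos hodd
      _ = 1 / 8 := by norm_num
  calc ∑ p ∈ S, g p = ∑ p ∈ S ∩ {2, 3}, g p + ∑ p ∈ S \ {2, 3}, g p :=
        (sum_inter_add_sum_sdiff _ _ _).symm
    _ ≤ ∑ p ∈ ({2, 3} : Finset ℕ), g p + 1 / 8 :=
        add_le_add (sum_le_sum_of_subset_of_nonneg inter_subset_right fun _ _ _ => hg _) hrest
    _ ≤ 1 := by rw [sum_pair (by norm_num)]; linarith

lemma sum_prime_rpow_neg_le {S : Finset ℕ} (hS : ∀ p ∈ S, p.Prime) {σ : ℝ} (hσ₁ : 1 / 2 ≤ σ)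
    (hσ₂ : σ ≤ 2) :
    ∑ p ∈ S, (p : ℝ) ^ (-σ) ≤ (∑ p ∈ S, log p) ^ ((2 - σ) / 2) := by
  have hσ : 0 < σ := by linarith
  have hP : 1 ≤ 2 / σ := by rw [le_div_iff₀ hσ]; linarith
  have hlog : ∀ p ∈ S, 0 < log p := fun p hp =>
    log_pos (by exact_mod_cast (hS p hp).one_lt)
  have holder := inner_le_weight_mul_Lp_of_nonneg S hP (fun p => log p)
    (fun p => (p : ℝ) ^ (-σ) / log p) log_natCast_nonneg fun p => by
      have := log_natCast_nonneg p; positivity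
  have hsum : ∑ p ∈ S, log p * ((p : ℝ) ^ (-σ) / log p) = ∑ p ∈ S, (p : ℝ) ^ (-σ) :=
    sum_congr rfl fun p hp => mul_div_cancel₀ _ (hlog p hp).ne'
  have hweighted : ∑ p ∈ S, log p * ((p : ℝ) ^ (-σ) / log p) ^ (2 / σ) =
      ∑ p ∈ S, log p ^ (1 - 2 / σ) / (p : ℝ) ^ 2 := by
    refine sum_congr rfl fun p hp => ?_
    have hp₀ : (0 : ℝ) ≤ p := Nat.cast_nonneg p
    rw [div_rpow (rpow_nonneg hp₀ _) (hlog p hp).le, ← rpow_mul hp₀,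
      show -σ * (2 / σ) = -(2 : ℕ) by field_simp; norm_num, rpow_neg hp₀, rpow_natCast,
      rpow_sub (hlog p hp), rpow_one]
    field_simp
  have ha₃ : -3 ≤ 1 - 2 / σ := by
    rw [le_sub_iff_add_le, ← le_sub_iff_add_le', div_le_iff₀ hσ]; linarith
  have hbound : (∑ p ∈ S, log p * ((p : ℝ) ^ (-σ) / log p) ^ (2 / σ)) ^ (2 / σ)⁻¹ ≤ 1 := by
    rw [hweighted]
    refine rpow_le_one (sum_nonneg fun p _ => ?_)
      (sum_prime_log_rpow_div_sq_le_one hS ha₃ (by linarith)) (by positivity)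
    have := log_natCast_nonneg p
    positivity
  rw [hsum, show 1 - (2 / σ)⁻¹ = (2 - σ) / 2 by field_simp] at holder
  exact holder.trans (mul_le_of_le_one_right (by positivity) hbound)

lemma sum_log_primeFactors_le (n : ℕ) : ∑ p ∈ n.primeFactors, log p ≤ log n := by
  rcases n.eq_zero_or_pos with rfl | hn
  · simp
  rw [← log_prod fun p hp => Nat.cast_ne_zero.2 (Nat.prime_of_mem_primeFactors hp).ne_zero,
    ← Nat.cast_prod]
  have hdvd := Nat.prod_primeFactors_dvd n
  exact log_le_log (by exact_mod_cast Nat.pos_of_dvd_of_pos hdvd hn)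
    (by exact_mod_cast Nat.le_of_dvd hn hdvd)

lemma norm_one_sub_mul_natCast_cpow_le {z : ℂ} (hz : ‖z‖ ≤ 1) {p : ℕ} (hp : 0 < p) (s : ℂ) :
    ‖1 - z * (p : ℂ) ^ s‖ ≤ 1 + (p : ℝ) ^ s.re := by
  calc ‖1 - z * (p : ℂ) ^ s‖ ≤ ‖(1 : ℂ)‖ + ‖z‖ * ‖(p : ℂ) ^ s‖ := by
        rw [← norm_mul]; exact norm_sub_le _ _
    _ ≤ 1 + 1 * (p : ℝ) ^ s.re := by
        rw [norm_one, Complex.norm_natCast_cpow_of_pos hp]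
        gcongr
    _ = 1 + (p : ℝ) ^ s.re := by rw [one_mul]

open Complex in
theorem stmt_2_general (q : ℕ) (σ : ℝ) (hσ1 : 1 / 2 ≤ σ) (hσ2 : σ ≤ 2)
    (χ : ℕ → ℂ) (hbd : ∀ p : ℕ, p.Prime → ‖χ p‖ ≤ 1) (t : ℝ) :
    ‖∏ p ∈ q.primeFactors, (1 - χ p * (p : ℂ) ^ (-(↑σ + ↑t * I)))‖ ≤
      Real.exp ((Real.log q) ^ ((2 - σ) / 2)) := by
  have hprime : ∀ p ∈ q.primeFactors, p.Prime := fun p => Nat.prime_of_mem_primeFactors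
  calc ‖∏ p ∈ q.primeFactors, (1 - χ p * (p : ℂ) ^ (-(↑σ + ↑t * I)))‖
      = ∏ p ∈ q.primeFactors, ‖1 - χ p * (p : ℂ) ^ (-(↑σ + ↑t * I))‖ := norm_prod _ _
    _ ≤ ∏ p ∈ q.primeFactors, (1 + (p : ℝ) ^ (-σ)) :=
        prod_le_prod (fun _ _ => norm_nonneg _) fun p hp => by
          simpa using norm_one_sub_mul_natCast_cpow_le (hbd p (hprime p hp))
            (hprime p hp).pos (-(↑σ + ↑t * I))
    _ ≤ Real.exp (∑ p ∈ q.primeFactors, (p : ℝ) ^ (-σ)) :=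
        prod_one_add_le_exp_sum _ fun p => by positivity
    _ ≤ Real.exp ((∑ p ∈ q.primeFactors, Real.log p) ^ ((2 - σ) / 2)) :=
        Real.exp_le_exp.2 (sum_prime_rpow_neg_le hprime hσ1 hσ2)
    _ ≤ Real.exp (Real.log q ^ ((2 - σ) / 2)) := by
        gcongr
        exact sum_log_primeFactors_le q

open Complex in
/-- For any integer `q ≥ 3`, real `1/2 ≤ σ ≤ 2`, and completely multiplicative `χ`
with `|χ(p)| ≤ 1`, one has
`|∏_{p ∣ q} (1 - χ(p) p^{-σ-it})| ≤ exp((log q)^{(2-σ)/2})` for all real `t`. -/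
theorem stmt_2 (q : ℕ) (hq : 3 ≤ q) (σ : ℝ) (hσ1 : 1 / 2 ≤ σ) (hσ2 : σ ≤ 2)
    (χ : ℕ → ℂ) (hone : χ 1 = 1) (hmul : ∀ m n : ℕ, χ (m * n) = χ m * χ n)
    (hbd : ∀ p : ℕ, p.Prime → ‖χ p‖ ≤ 1) (t : ℝ) :
    ‖∏ p ∈ q.primeFactors, (1 - χ p * (p : ℂ) ^ (-(↑σ + ↑t * I)))‖ ≤
      Real.exp ((Real.log q) ^ ((2 - σ) / 2)) :=
  stmt_2_general q σ hσ1 hσ2 χ hbd t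
end

section
/- For all real γ, real θ with 0 ≤ θ ≤ 1/4, and real β with 1/2 < β < 1, one has ∫_{-∞}^{∞} (1+|t+γ|)^{2θ} / ((1/2-β)² + t²) dt ≤ 2π (1+|γ|)^{2θ} / (β - 1/2). -/
/-!
With `a = β - 1/2`, Peetre's inequality `1 + |t + γ| ≤ (1 + |γ|)(1 + |t|)` and `2θ ≤ 1/2` bound
the integrand by `(1 + |γ|)^{2θ} (1 + min (|t|/2) √|t|) / (a² + t²)`. The `1` contributes the
Cauchy integral `π / a`; the rest is at most `1/(4a)` per unit length near `0` (AM-GM) and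
`|t|^{-3/2}` beyond `1`, so it contributes at most `1/(2a) + 4`, which is `≤ π / a` as `a < 1/2`.
-/

open MeasureTheory Set Real

lemma integrable_comp_abs {E : Type*} [NormedAddCommGroup E] {f : ℝ → E}
    (hf : IntegrableOn f (Ioi 0)) : Integrable (fun x : ℝ => f |x|) := by
  have hIoi : IntegrableOn (fun x : ℝ => f |x|) (Ioi 0) :=
    hf.congr_fun (fun x hx => by rw [abs_of_pos hx]) measurableSet_Ioi
  have hIic : IntegrableOn (fun x : ℝ => f |x|) (Iic 0) := by
    have hneg : MeasurableEmbedding fun x : ℝ => -x := (Homeomorph.neg ℝ).measurableEmbedding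
    rw [← Measure.map_neg_eq_self (volume : Measure ℝ), hneg.integrableOn_map_iff]
    simp_rw [Function.comp_def, abs_neg, neg_preimage, neg_Iic, neg_zero]
    exact (integrableOn_Ici_iff_integrableOn_Ioi).mpr hIoi
  simpa only [Iic_union_Ioi, integrableOn_univ] using hIic.union hIoi

lemma inv_sq_add_sq_eq {a : ℝ} (ha : a ≠ 0) (t : ℝ) :
    (a ^ 2 + t ^ 2)⁻¹ = (a ^ 2)⁻¹ * (1 + (t / a) ^ 2)⁻¹ := by
  field_simp

lemma integrable_inv_sq_add_sq {a : ℝ} (ha : a ≠ 0) :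
    Integrable fun t : ℝ => (a ^ 2 + t ^ 2)⁻¹ := by
  simpa only [inv_sq_add_sq_eq ha] using
    (integrable_inv_one_add_sq.comp_div ha).const_mul (a ^ 2)⁻¹

lemma integral_univ_inv_sq_add_sq {a : ℝ} (ha : 0 < a) :
    ∫ t : ℝ, (a ^ 2 + t ^ 2)⁻¹ = π / a := by
  simp_rw [inv_sq_add_sq_eq ha.ne']
  rw [integral_const_mul, Measure.integral_comp_div (fun y : ℝ => (1 + y ^ 2)⁻¹),
    integral_univ_inv_one_add_sq, smul_eq_mul, abs_of_pos ha]
  field_simp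

lemma one_add_abs_add_le_mul (t γ : ℝ) : 1 + |t + γ| ≤ (1 + |γ|) * (1 + |t|) := by
  nlinarith [abs_add_le t γ, abs_nonneg t, abs_nonneg γ, mul_nonneg (abs_nonneg γ) (abs_nonneg t)]

lemma sqrt_one_add_le_one_add_min {u : ℝ} (hu : 0 ≤ u) : √(1 + u) ≤ 1 + min (u / 2) √u := by
  rcases le_total (u / 2) √u with h | h
  · rw [min_eq_left h, sqrt_le_left (by linarith)]
    nlinarith
  · rw [min_eq_right h, sqrt_le_left (by positivity)]
    nlinarith [sq_sqrt hu, sqrt_nonneg u]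

lemma one_add_abs_add_rpow_le {θ : ℝ} (hθ0 : 0 ≤ θ) (hθ : θ ≤ 1 / 4) (t γ : ℝ) :
    (1 + |t + γ|) ^ (2 * θ) ≤ (1 + |γ|) ^ (2 * θ) * (1 + min (|t| / 2) √|t|) := calc
  (1 + |t + γ|) ^ (2 * θ) ≤ ((1 + |γ|) * (1 + |t|)) ^ (2 * θ) :=
    rpow_le_rpow (by positivity) (one_add_abs_add_le_mul t γ) (by linarith)
  _ = (1 + |γ|) ^ (2 * θ) * (1 + |t|) ^ (2 * θ) := mul_rpow (by positivity) (by positivity)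
  _ ≤ (1 + |γ|) ^ (2 * θ) * (1 + |t|) ^ (1 / 2 : ℝ) := by
    gcongr
    · linarith [abs_nonneg t]
    · linarith
  _ ≤ (1 + |γ|) ^ (2 * θ) * (1 + min (|t| / 2) √|t|) := by
    rw [← sqrt_eq_rpow]
    gcongr
    exact sqrt_one_add_le_one_add_min (abs_nonneg t)

/-- What the weight `√(1 + |t|)` adds to the Cauchy kernel `(a² + t²)⁻¹`, after the bound
`√(1 + u) ≤ 1 + min (u / 2) √u`. -/
noncomputable def tailKernel (a u : ℝ) : ℝ := min (u / 2) √u / (a ^ 2 + u ^ 2)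

section tailKernel

variable {a : ℝ}

lemma continuous_tailKernel (ha : a ≠ 0) : Continuous (tailKernel a) :=
  ((continuous_id.div_const 2).min continuous_sqrt).div (by fun_prop)
    fun u => by positivity

lemma tailKernel_le_inv (ha : 0 < a) (u : ℝ) : tailKernel a u ≤ 1 / (4 * a) := calc
  tailKernel a u ≤ (u / 2) / (a ^ 2 + u ^ 2) := by
    unfold tailKernel
    gcongr
    exact min_le_left _ _
  _ ≤ 1 / (4 * a) := by
    rw [div_le_div_iff₀ (by positivity) (by positivity)]
    nlinarith [sq_nonneg (a - u)]

lemma tailKernel_le_rpow {u : ℝ} (hu : 1 ≤ u) : tailKernel a u ≤ u ^ (-(3 : ℝ) / 2) := by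
  have hu0 : 0 < u := by linarith
  have hrpow : u ^ (-(3 : ℝ) / 2) = √u / u ^ 2 := by
    rw [sqrt_eq_rpow, eq_div_iff (by positivity), ← rpow_natCast u 2, ← rpow_add hu0]
    norm_num
  rw [hrpow]
  exact div_le_div₀ (sqrt_nonneg u) (min_le_right _ _) (by positivity) (by nlinarith)

lemma tailKernel_nonneg {u : ℝ} (hu : 0 ≤ u) : 0 ≤ tailKernel a u :=
  div_nonneg (le_min (by linarith) (sqrt_nonneg u)) (by positivity)

lemma integrableOn_tailKernel_Ioc (ha : a ≠ 0) : IntegrableOn (tailKernel a) (Ioc 0 1) :=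
  ((continuous_tailKernel ha).integrableOn_Icc).mono_set Ioc_subset_Icc_self

lemma integrableOn_tailKernel_Ioi_one (ha : a ≠ 0) : IntegrableOn (tailKernel a) (Ioi 1) := by
  refine (integrableOn_Ioi_rpow_of_lt (a := -(3 : ℝ) / 2) (by norm_num) one_pos).mono'
    (continuous_tailKernel ha).aestronglyMeasurable.restrict ?_
  filter_upwards [ae_restrict_mem measurableSet_Ioi] with u (hu : 1 < u)
  rw [norm_of_nonneg (tailKernel_nonneg (by linarith))]
  exact tailKernel_le_rpow hu.le

lemma integrableOn_tailKernel (ha : a ≠ 0) : IntegrableOn (tailKernel a) (Ioi 0) := by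
  simpa only [Ioc_union_Ioi_eq_Ioi zero_le_one] using
    (integrableOn_tailKernel_Ioc ha).union (integrableOn_tailKernel_Ioi_one ha)

lemma integral_tailKernel_le (ha : 0 < a) :
    ∫ u in Ioi 0, tailKernel a u ≤ 1 / (4 * a) + 2 := by
  have hnear : ∫ u in Ioc 0 1, tailKernel a u ≤ 1 / (4 * a) := calc
    ∫ u in Ioc 0 1, tailKernel a u ≤ ∫ _ in Ioc (0 : ℝ) 1, 1 / (4 * a) :=
      setIntegral_mono_on (integrableOn_tailKernel_Ioc ha.ne')
        (integrableOn_const measure_Ioc_lt_top.ne) measurableSet_Ioc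
        fun u _ => tailKernel_le_inv ha u
    _ = 1 / (4 * a) := by simp
  have hfar : ∫ u in Ioi 1, tailKernel a u ≤ 2 := calc
    ∫ u in Ioi 1, tailKernel a u ≤ ∫ u in Ioi (1 : ℝ), u ^ (-(3 : ℝ) / 2) :=
      setIntegral_mono_on (integrableOn_tailKernel_Ioi_one ha.ne')
        (integrableOn_Ioi_rpow_of_lt (by norm_num) one_pos) measurableSet_Ioi
        fun u hu => tailKernel_le_rpow hu.le
    _ = 2 := by
      rw [integral_Ioi_rpow_of_lt (by norm_num) one_pos]
      norm_num
  rw [← Ioc_union_Ioi_eq_Ioi zero_le_one, setIntegral_union (Ioc_disjoint_Ioi le_rfl)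
    measurableSet_Ioi (integrableOn_tailKernel_Ioc ha.ne') (integrableOn_tailKernel_Ioi_one ha.ne')]
  linarith

lemma integrable_majorant (ha : a ≠ 0) :
    Integrable fun t : ℝ => (a ^ 2 + t ^ 2)⁻¹ + tailKernel a |t| :=
  (integrable_inv_sq_add_sq ha).add (integrable_comp_abs (integrableOn_tailKernel ha))

lemma integral_majorant_le (ha : 0 < a) (ha2 : a < 1 / 2) :
    ∫ t : ℝ, ((a ^ 2 + t ^ 2)⁻¹ + tailKernel a |t|) ≤ 2 * π / a := by
  rw [integral_add (integrable_inv_sq_add_sq ha.ne')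
    (integrable_comp_abs (integrableOn_tailKernel ha.ne')), integral_univ_inv_sq_add_sq ha,
    integral_comp_abs]
  have htail := integral_tailKernel_le ha
  have hslack : 1 / (2 * a) + 4 ≤ π / a := by
    rw [div_add' _ _ _ (by positivity), div_le_div_iff₀ (by positivity) ha]
    nlinarith [pi_gt_three]
  have h24 : 2 * (1 / (4 * a) + 2) = 1 / (2 * a) + 4 := by field_simp; ring
  rw [mul_div_assoc]
  linarith

lemma rpow_div_sq_add_sq_le {θ : ℝ} (hθ0 : 0 ≤ θ) (hθ : θ ≤ 1 / 4) (ha : a ≠ 0) (t γ : ℝ) :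
    (1 + |t + γ|) ^ (2 * θ) / (a ^ 2 + t ^ 2) ≤
      (1 + |γ|) ^ (2 * θ) * ((a ^ 2 + t ^ 2)⁻¹ + tailKernel a |t|) := by
  have hmajorant : (a ^ 2 + t ^ 2)⁻¹ + tailKernel a |t|
      = (1 + min (|t| / 2) √|t|) / (a ^ 2 + t ^ 2) := by
    rw [tailKernel, sq_abs]; ring
  rw [hmajorant, ← mul_div_assoc]
  gcongr
  exact one_add_abs_add_rpow_le hθ0 hθ t γ

end tailKernel

/-- For real `γ`, `0 ≤ θ ≤ 1/4`, and `1/2 < β < 1`,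
`∫_{-∞}^{∞} (1+|t+γ|)^{2θ} / ((1/2-β)² + t²) dt ≤ 2π (1+|γ|)^{2θ} / (β - 1/2)`. -/
theorem stmt_8 (γ θ β : ℝ) (hθ1 : 0 ≤ θ) (hθ2 : θ ≤ 1 / 4)
    (hβ1 : 1 / 2 < β) (hβ2 : β < 1) :
    ∫ t : ℝ, (1 + |t + γ|) ^ (2 * θ) / ((1 / 2 - β) ^ 2 + t ^ 2) ≤
      2 * Real.pi * (1 + |γ|) ^ (2 * θ) / (β - 1 / 2) := by
  have ha : 0 < β - 1 / 2 := by linarith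
  have ha2 : β - 1 / 2 < 1 / 2 := by linarith
  have hsq : (1 / 2 - β) ^ 2 = (β - 1 / 2) ^ 2 := by ring
  simp_rw [hsq]
  set a := β - 1 / 2
  calc ∫ t : ℝ, (1 + |t + γ|) ^ (2 * θ) / (a ^ 2 + t ^ 2)
      ≤ ∫ t : ℝ, (1 + |γ|) ^ (2 * θ) * ((a ^ 2 + t ^ 2)⁻¹ + tailKernel a |t|) :=
        integral_mono_of_nonneg (.of_forall fun t => by positivity)
          ((integrable_majorant ha.ne').const_mul _)
          (.of_forall (rpow_div_sq_add_sq_le hθ1 hθ2 ha.ne' · γ))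
    _ = (1 + |γ|) ^ (2 * θ) * ∫ t : ℝ, ((a ^ 2 + t ^ 2)⁻¹ + tailKernel a |t|) :=
        integral_const_mul _ _
    _ ≤ (1 + |γ|) ^ (2 * θ) * (2 * π / a) := by
        gcongr
        exact integral_majorant_le ha ha2
    _ = 2 * π * (1 + |γ|) ^ (2 * θ) / a := by ring
end
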